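/- arXiv:1905.01415 — 2 statements merged into one kernel-verified Lean document; each statement's English description precedes it below -/
import Mathlib

section
/- The bilinear operator B defined by ⟨B(u,v),w⟩ = ⟨(u·∇)(v - α²Δv), w⟩ + ⟨(∇u)*·(v - α²Δv), w⟩ satisfies ⟨B(u,v), u⟩ = 0 for all u, v ∈ D(A). -/
open MeasureTheory
open scoped BigOperators

/-- Partial derivative `∂ᵢ f` of a scalar function on `ℝ³`. -/
noncomputable def pd (f : (Fin 3 → ℝ) → ℝ) (i : Fin 3) (x : Fin 3 → ℝ) : ℝ :=
  fderiv ℝ f x (Pi.single i 1)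

/-- Laplacian of a scalar function on `ℝ³`. -/
noncomputable def lap (f : (Fin 3 → ℝ) → ℝ) (x : Fin 3 → ℝ) : ℝ :=
  ∑ i : Fin 3, pd (pd f i) i x

/-- The `j`-th component of `v - α²Δv`. -/
noncomputable def helm (α : ℝ) (v : (Fin 3 → ℝ) → (Fin 3 → ℝ)) (x : Fin 3 → ℝ) (j : Fin 3) : ℝ :=
  v x j - α ^ 2 * lap (fun y => v y j) x

/-- The pairing `⟨B(u,v),w⟩ = ⟨(u·∇)(v-α²Δv), w⟩ + ⟨(∇u)*·(v-α²Δv), w⟩`. -/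
noncomputable def Bpair (α : ℝ) (u v w : (Fin 3 → ℝ) → (Fin 3 → ℝ)) : ℝ :=
  ∫ x, ∑ i : Fin 3, ∑ j : Fin 3,
    (u x i * pd (fun y => helm α v y j) i x * w x j
      + pd (fun y => u y i) j x * helm α v x i * w x j)

/-- Smoothness of partial derivatives. -/
lemma pd_contDiff {f : (Fin 3 → ℝ) → ℝ} (hf : ContDiff ℝ (⊤ : ℕ∞) f) (i : Fin 3) :
    ContDiff ℝ (⊤ : ℕ∞) (pd f i) := by
  have : ContDiff ℝ (⊤ : ℕ∞) (fderiv ℝ f) := hf.fderiv_right (by simp)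
  exact this.clm_apply contDiff_const

/-- Product rule for `pd`. -/
lemma pd_mul {f g : (Fin 3 → ℝ) → ℝ} {x : Fin 3 → ℝ} (hf : DifferentiableAt ℝ f x)
    (hg : DifferentiableAt ℝ g x) (i : Fin 3) :
    pd (fun y => f y * g y) i x = pd f i x * g x + f x * pd g i x := by
  simp only [pd]
  rw [fderiv_fun_mul hf hg]
  simp only [ContinuousLinearMap.add_apply, ContinuousLinearMap.smul_apply, smul_eq_mul]
  ring

/-- Sum rule for `pd`. -/
lemma pd_sum {f : Fin 3 → (Fin 3 → ℝ) → ℝ} {x : Fin 3 → ℝ}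
    (hf : ∀ j, DifferentiableAt ℝ (f j) x) (i : Fin 3) :
    pd (fun y => ∑ j : Fin 3, f j y) i x = ∑ j : Fin 3, pd (f j) i x := by
  simp only [pd]
  rw [fderiv_fun_sum (fun j _ => hf j)]
  simp

/-- The integral of a partial derivative of a compactly supported smooth function vanishes. -/
lemma integral_pd_eq_zero (f : (Fin 3 → ℝ) → ℝ) (hf : ContDiff ℝ (⊤ : ℕ∞) f)
    (hsupp : HasCompactSupport f) (i : Fin 3) : ∫ x, pd f i x = 0 := by
  obtain ⟨C, hC⟩ := ContDiff.lipschitzWith_of_hasCompactSupport hsupp hf (by simp)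
  have hone : LipschitzWith 0 (fun _ : Fin 3 → ℝ => (1 : ℝ)) := LipschitzWith.const 1
  have key := LipschitzWith.integral_lineDeriv_mul_eq (μ := volume) hone hC hsupp
    (-(Pi.single i 1))
  have hc : ∀ (x w : Fin 3 → ℝ), lineDeriv ℝ (fun _ : Fin 3 → ℝ => (1 : ℝ)) x w = 0 := by
    intro x w
    rw [(differentiableAt_const (1 : ℝ)).lineDeriv_eq_fderiv]
    simp
  simp only [hc, zero_mul, integral_zero, neg_neg, mul_one] at key
  have : ∀ x, lineDeriv ℝ f x (Pi.single i 1) = pd f i x := fun x =>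
    ((hf.differentiable (by simp)) x).lineDeriv_eq_fderiv
  rw [← integral_congr_ae (Filter.Eventually.of_forall this)]
  exact key.symm

/-- The Navier–Stokes-α bilinear operator `B` satisfies `⟨B(u,v), u⟩ = 0` for all
`u, v ∈ D(A)` (here represented by smooth divergence-free fields supported in `Ω`). -/
theorem Bpair_self_eq_zero
    (Ω : Set (Fin 3 → ℝ)) (hΩ : IsOpen Ω) (α : ℝ) (hα : 0 < α)
    (u v : (Fin 3 → ℝ) → (Fin 3 → ℝ))
    (hu : ∀ j : Fin 3, ContDiff ℝ (⊤ : ℕ∞) (fun x => u x j))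
    (hv : ∀ j : Fin 3, ContDiff ℝ (⊤ : ℕ∞) (fun x => v x j))
    (husupp : HasCompactSupport u) (hutΩ : tsupport u ⊆ Ω)
    (hvsupp : HasCompactSupport v) (hvtΩ : tsupport v ⊆ Ω)
    (hdivu : ∀ x, ∑ i : Fin 3, pd (fun y => u y i) i x = 0)
    (hdivv : ∀ x, ∑ i : Fin 3, pd (fun y => v y i) i x = 0) :
    Bpair α u v u = 0 := by
  classical
  -- the components of `v - α²Δv`
  set h : Fin 3 → (Fin 3 → ℝ) → ℝ := fun j y => helm α v y j with hh
  have hsm_h : ∀ j, ContDiff ℝ (⊤ : ℕ∞) (h j) := by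
    intro j
    have : ContDiff ℝ (⊤ : ℕ∞) (fun y => v y j - α ^ 2 * ∑ i : Fin 3, pd (pd (fun z => v z j) i) i y) :=
      (hv j).sub (contDiff_const.mul (ContDiff.sum fun i _ =>
        pd_contDiff (pd_contDiff (hv j) i) i))
    exact this
  have hsm_u : ∀ j, ContDiff ℝ (⊤ : ℕ∞) (fun y => u y j) := hu
  -- the scalar function φ = (v - α²Δv)·u
  set φ : (Fin 3 → ℝ) → ℝ := fun y => ∑ j : Fin 3, h j y * u y j with hφ
  have hsm_φ : ContDiff ℝ (⊤ : ℕ∞) φ :=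
    ContDiff.sum fun j _ => (hsm_h j).mul (hsm_u j)
  -- the vector field F i = u i * φ
  set F : Fin 3 → (Fin 3 → ℝ) → ℝ := fun i y => u y i * φ y with hF
  have hsm_F : ∀ i, ContDiff ℝ (⊤ : ℕ∞) (F i) := fun i => (hsm_u i).mul hsm_φ
  have hFsupp : ∀ i, HasCompactSupport (F i) := by
    intro i
    apply husupp.mono
    intro x hx
    simp only [F, Function.mem_support] at hx ⊢
    intro hzero
    apply hx
    rw [hzero]
    simp
  -- differentiability facts
  have hdu : ∀ i x, DifferentiableAt ℝ (fun y => u y i) x := fun i x =>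
    ((hsm_u i).differentiable (by simp)) x
  have hdh : ∀ j x, DifferentiableAt ℝ (h j) x := fun j x =>
    ((hsm_h j).differentiable (by simp)) x
  have hdφ : ∀ x, DifferentiableAt ℝ φ x := fun x => (hsm_φ.differentiable (by simp)) x
  -- pointwise identity: the integrand equals the divergence of `(u φ)`
  have key : ∀ x, (∑ i : Fin 3, ∑ j : Fin 3,
      (u x i * pd (fun y => helm α v y j) i x * u x j
        + pd (fun y => u y i) j x * helm α v x i * u x j))
      = ∑ i : Fin 3, pd (F i) i x := by
    intro x
    have hpdF : ∀ i, pd (F i) i x = pd (fun y => u y i) i x * φ x + u x i * pd φ i x :=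
      fun i => pd_mul (hdu i x) (hdφ x) i
    have hpdφ : ∀ i, pd φ i x
        = ∑ j : Fin 3, (pd (h j) i x * u x j + h j x * pd (fun y => u y j) i x) := by
      intro i
      have := pd_sum (f := fun j y => h j y * u y j) (x := x)
        (fun j => (hdh j x).mul (hdu j x)) i
      rw [show φ = (fun y => ∑ j : Fin 3, h j y * u y j) from rfl, this]
      exact Finset.sum_congr rfl fun j _ => pd_mul (hdh j x) (hdu j x) i
    calc (∑ i : Fin 3, ∑ j : Fin 3,
        (u x i * pd (fun y => helm α v y j) i x * u x j
          + pd (fun y => u y i) j x * helm α v x i * u x j))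
        = (∑ i : Fin 3, ∑ j : Fin 3, u x i * pd (h j) i x * u x j)
          + ∑ i : Fin 3, ∑ j : Fin 3, pd (fun y => u y i) j x * h i x * u x j := by
          rw [← Finset.sum_add_distrib]
          refine Finset.sum_congr rfl fun i _ => ?_
          rw [← Finset.sum_add_distrib]
      _ = (∑ i : Fin 3, ∑ j : Fin 3, u x i * pd (h j) i x * u x j)
          + ∑ i : Fin 3, ∑ j : Fin 3, pd (fun y => u y j) i x * h j x * u x i := by
          congr 1
          exact Finset.sum_comm
      _ = ∑ i : Fin 3, u x i *
            ∑ j : Fin 3, (pd (h j) i x * u x j + h j x * pd (fun y => u y j) i x) := by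
          rw [← Finset.sum_add_distrib]
          refine Finset.sum_congr rfl fun i _ => ?_
          rw [Finset.mul_sum, ← Finset.sum_add_distrib]
          refine Finset.sum_congr rfl fun j _ => ?_
          ring
      _ = ∑ i : Fin 3, (pd (fun y => u y i) i x * φ x + u x i *
            ∑ j : Fin 3, (pd (h j) i x * u x j + h j x * pd (fun y => u y j) i x)) := by
          rw [Finset.sum_add_distrib, ← Finset.sum_mul, hdivu x, zero_mul, zero_add]
      _ = ∑ i : Fin 3, pd (F i) i x := by
          refine Finset.sum_congr rfl fun i _ => ?_
          rw [hpdF i, hpdφ i]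
  -- conclude
  rw [Bpair]
  rw [integral_congr_ae (Filter.Eventually.of_forall key)]
  have hint : ∀ i : Fin 3, Integrable (fun x => pd (F i) i x) := by
    intro i
    have hc : Continuous (pd (F i) i) := (pd_contDiff (hsm_F i) i).continuous
    have hs : HasCompactSupport (pd (F i) i) := by
      have h1 : HasCompactSupport (fderiv ℝ (F i)) := (hFsupp i).fderiv ℝ
      exact h1.comp_left (g := fun L : (Fin 3 → ℝ) →L[ℝ] ℝ => L (Pi.single i 1)) rfl
    exact hc.integrable_of_hasCompactSupport hs
  rw [integral_finset_sum _ (fun i _ => hint i)]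
  exact Finset.sum_eq_zero fun i _ => integral_pd_eq_zero (F i) (hsm_F i) (hFsupp i) i
end

section
/- Zowe–Kurcyusz Lagrange multiplier theorem: Let X, Y be Banach spaces, M ⊆ X nonempty closed convex, J : X → ℝ Fréchet differentiable at x̂ and F : X → Y continuously Fréchet differentiable at x̂, where x̂ ∈ M with F(x̂) = 0 is a local minimizer of J over {x ∈ M : F(x) = 0}. If x̂ is a regular point, i.e. F'(x̂)[C(x̂)] = Y where C(x̂) = {θ(x − x̂) : x ∈ M, θ ≥ 0}, then there exists λ ∈ Y' such that J'(x̂)[s] − ⟨λ, F'(x̂)[s]⟩ ≥ 0 for all s ∈ C(x̂). -/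
/-!
Regularity makes `A = F'(x̂)` open relative to the cone: Baire's theorem gives a ball around `0`
inside the closure of `A ((M - x̂) ∩ B₁)`, and a Graves iteration, convergent because `M` is closed
and convex and `X` is complete, removes the closure. So every `y` is `A s` with
`s ∈ (c‖y‖) • ((M - x̂) ∩ B₁)`. The same iteration run on `F` near `x̂ + t s` (Lyusternik–Graves)
shows that every cone direction `s` with `A s = 0` is tangent to `M ∩ F⁻¹{0}` at `x̂`, so local
minimality gives `J'(x̂) s ≥ 0` there. The M. Riesz extension theorem, applied to the cone
`{(A s, t) : s ∈ C(x̂), J'(x̂) s ≤ t}` in `Y × ℝ`, then produces `λ`, which is bounded by the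
open-mapping estimate.
-/

open Set Filter Metric Topology Pointwise

theorem StarConvex.smul_set_subset_smul_set_of_le {𝕜 E : Type*} [Field 𝕜] [LinearOrder 𝕜]
    [IsStrictOrderedRing 𝕜] [AddCommGroup E] [Module 𝕜 E] {s : Set E} (hs : StarConvex 𝕜 0 s)
    {a b : 𝕜} (ha : 0 ≤ a) (hab : a ≤ b) : a • s ⊆ b • s := by
  rcases (ha.trans hab).eq_or_lt with rfl | hb
  · rw [le_antisymm hab ha]
  rintro _ ⟨x, hx, rfl⟩
  refine ⟨(a / b) • x, hs.smul_mem hx (div_nonneg ha hb.le) ((div_le_one hb).2 hab), ?_⟩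
  simp only [smul_smul, mul_div_cancel₀ _ hb.ne']

theorem smul_set_subset_closedBall_of_subset_closedBall {E : Type*} [NormedAddCommGroup E]
    [NormedSpace ℝ E] {s : Set E} (hs : s ⊆ closedBall 0 1) {a : ℝ} (ha : 0 ≤ a) :
    a • s ⊆ closedBall 0 a :=
  smul_unitClosedBall_of_nonneg (E := E) ha ▸ smul_set_mono hs

theorem mem_posTangentConeAt_of_eventually_exists_norm_sub_le {E : Type*} [NormedAddCommGroup E]
    [NormedSpace ℝ E] {S : Set E} {x y : E} {g : ℝ → ℝ}
    (hg : Tendsto (fun t ↦ t⁻¹ * g t) (𝓝[>] 0) (𝓝 0))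
    (h : ∀ᶠ t in 𝓝[>] 0, ∃ z ∈ S, ‖z - (x + t • y)‖ ≤ g t) :
    y ∈ posTangentConeAt S x := by
  classical
  let z (t : ℝ) : E := if ht : ∃ z ∈ S, ‖z - (x + t • y)‖ ≤ g t then ht.choose else x
  have hz : ∀ᶠ t in 𝓝[>] 0, z t ∈ S ∧ ‖z t - (x + t • y)‖ ≤ g t :=
    h.mono fun t ht ↦ by simpa only [z, dif_pos ht] using ht.choose_spec
  have herr : Tendsto (fun t ↦ t⁻¹ • (z t - (x + t • y))) (𝓝[>] 0) (𝓝 0) := by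
    refine squeeze_zero_norm' ?_ hg
    filter_upwards [hz, self_mem_nhdsWithin] with t ht (ht0 : 0 < t)
    rw [norm_smul, Real.norm_of_nonneg (inv_nonneg.2 ht0.le)]
    exact mul_le_mul_of_nonneg_left ht.2 (inv_nonneg.2 ht0.le)
  have hquot : Tendsto (fun t ↦ t⁻¹ • (z t - x)) (𝓝[>] 0) (𝓝 y) := by
    refine Tendsto.congr' ?_ (by simpa using (tendsto_const_nhds (x := y)).add herr)
    filter_upwards [self_mem_nhdsWithin] with t (ht0 : 0 < t)
    rw [smul_sub t⁻¹ (z t), smul_add, inv_smul_smul₀ ht0.ne', smul_sub]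
    abel
  refine mem_tangentConeAt_of_seq (𝓝[>] 0) (fun t ↦ (t⁻¹).toNNReal) (fun t ↦ z t - x) ?_
    (hz.mono fun t ht ↦ by simpa using ht.1) ?_
  · refine Tendsto.congr' ?_ (by simpa using (tendsto_id.mono_left nhdsWithin_le_nhds).smul hquot)
    filter_upwards [self_mem_nhdsWithin] with t (ht0 : 0 < t)
    exact smul_inv_smul₀ ht0.ne' _
  · refine Tendsto.congr' ?_ hquot
    filter_upwards [self_mem_nhdsWithin] with t (ht0 : 0 < t)
    rw [NNReal.smul_def, Real.coe_toNNReal _ (inv_nonneg.2 ht0.le)]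

section

variable {X Y : Type*} [NormedAddCommGroup X] [NormedSpace ℝ X] [NormedAddCommGroup Y]

theorem exists_seq_of_forall_exists_halving {D : Set X} (hDconv : Convex ℝ D) (hD0 : 0 ∈ D)
    (hD1 : D ⊆ closedBall 0 1) {G : X → Y} {x₀ : X} {c : ℝ} (hc : 0 ≤ c)
    (hstep : ∀ x, ‖x - x₀‖ ≤ 2 * c * (‖G x₀‖ - ‖G x‖) →
      ∃ d ∈ (c * ‖G x‖) • D, ‖G (x + d)‖ ≤ ‖G x‖ / 2) :
    ∃ x : ℕ → X, ∀ n, ‖G (x n)‖ ≤ (1 / 2) ^ n * ‖G x₀‖ ∧ x n - x₀ ∈ (2 * c * ‖G x₀‖) • D ∧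
      dist (x n) (x (n + 1)) ≤ c * ‖G x₀‖ * (1 / 2) ^ n := by
  choose! step hstep_mem hstep_le using hstep
  set g := ‖G x₀‖
  let x : ℕ → X := fun n ↦ (fun z ↦ z + step z)^[n] x₀
  have hx_succ (n : ℕ) : x (n + 1) = x n + step (x n) := Function.iterate_succ_apply' _ _ _
  have hstar : StarConvex ℝ 0 D := hDconv.starConvex hD0
  have hnorm {a : ℝ} (ha : 0 ≤ a) {z : X} (hz : z ∈ a • D) : ‖z‖ ≤ a := by
    simpa using smul_set_subset_closedBall_of_subset_closedBall hD1 ha hz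
  have hpow (n : ℕ) : (1 / 2 : ℝ) ^ n * g ≤ g :=
    mul_le_of_le_one_left (norm_nonneg _) (pow_le_one₀ (by norm_num) (by norm_num))
  -- the displacement is controlled by the decrease of `‖G‖`, which keeps `hstep` applicable
  have hinv (n : ℕ) :
      ‖G (x n)‖ ≤ (1 / 2) ^ n * g ∧ x n - x₀ ∈ (2 * c * (g - ‖G (x n)‖)) • D := by
    induction n with
    | zero => simp [x, g, zero_smul_set ⟨0, hD0⟩]
    | succ n ih =>
      obtain ⟨hGn, hxn⟩ := ih
      have hcoef : 0 ≤ 2 * c * (g - ‖G (x n)‖) := by nlinarith [hpow n]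
      have hpre := hnorm hcoef hxn
      have hsum : x n - x₀ + step (x n) ∈ (2 * c * (g - ‖G (x n)‖) + c * ‖G (x n)‖) • D := by
        rw [hDconv.add_smul hcoef (by positivity)]
        exact add_mem_add hxn (hstep_mem _ hpre)
      have hhalf := hstep_le _ hpre
      rw [hx_succ, add_sub_right_comm]
      exact ⟨by rw [pow_succ]; linarith, hstar.smul_set_subset_smul_set_of_le
        (add_nonneg hcoef (by positivity)) (by nlinarith) hsum⟩
  refine ⟨x, fun n ↦ ?_⟩
  have hcoef : 0 ≤ 2 * c * (g - ‖G (x n)‖) := by nlinarith [(hinv n).1, hpow n]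
  refine ⟨(hinv n).1, hstar.smul_set_subset_smul_set_of_le hcoef
    (by nlinarith [norm_nonneg (G (x n))]) (hinv n).2, ?_⟩
  rw [hx_succ, dist_eq_norm, sub_add_cancel_left, norm_neg]
  nlinarith [hnorm (by positivity) (hstep_mem _ (hnorm hcoef (hinv n).2)), (hinv n).1]

theorem exists_eq_zero_of_forall_exists_halving [CompleteSpace X] {D : Set X}
    (hDcl : IsClosed D) (hDconv : Convex ℝ D) (hD0 : 0 ∈ D) (hD1 : D ⊆ closedBall 0 1)
    {G : X → Y} {x₀ : X} {c : ℝ} (hc : 0 ≤ c)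
    (hGcont : ContinuousOn G (closedBall x₀ (2 * c * ‖G x₀‖)))
    (hstep : ∀ x, ‖x - x₀‖ ≤ 2 * c * (‖G x₀‖ - ‖G x‖) →
      ∃ d ∈ (c * ‖G x‖) • D, ‖G (x + d)‖ ≤ ‖G x‖ / 2) :
    ∃ ξ, ξ - x₀ ∈ (2 * c * ‖G x₀‖) • D ∧ G ξ = 0 := by
  obtain ⟨x, hx⟩ := exists_seq_of_forall_exists_halving hDconv hD0 hD1 hc hstep
  obtain ⟨ξ, hξ⟩ := cauchySeq_tendsto_of_complete <|
    cauchySeq_of_le_geometric (1 / 2) (c * ‖G x₀‖) (by norm_num) fun n ↦ (hx n).2.2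
  have hξD : ξ - x₀ ∈ (2 * c * ‖G x₀‖) • D :=
    (hDcl.smul₀ _).mem_of_tendsto (hξ.sub_const x₀) (Eventually.of_forall fun n ↦ (hx n).2.1)
  have hball {z : X} (hz : z - x₀ ∈ (2 * c * ‖G x₀‖) • D) :
      z ∈ closedBall x₀ (2 * c * ‖G x₀‖) := by
    simpa [dist_eq_norm] using
      smul_set_subset_closedBall_of_subset_closedBall hD1 (by positivity) hz
  refine ⟨ξ, hξD, tendsto_nhds_unique (f := G ∘ x) (l := atTop) ?_ ?_⟩
  · exact (hGcont ξ (hball hξD)).tendsto.comp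
      (tendsto_nhdsWithin_iff.2 ⟨hξ, Eventually.of_forall fun n ↦ hball (hx n).2.1⟩)
  · exact squeeze_zero_norm (fun n ↦ (hx n).1) <| by
      simpa using (tendsto_pow_atTop_nhds_zero_of_lt_one (by norm_num : (0 : ℝ) ≤ 1 / 2)
        (by norm_num)).mul_const ‖G x₀‖

variable [NormedSpace ℝ Y]

theorem Convex.closure_mem_nhds_zero_of_forall_mem_smul [CompleteSpace Y] {S : Set Y}
    (hS : Convex ℝ S) (hS0 : 0 ∈ S) (hcover : ∀ y, ∃ n : ℕ, y ∈ (n : ℝ) • S) :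
    closure S ∈ 𝓝 0 := by
  have hcover' (y : Y) : ∃ n : ℕ, y ∈ ((n : ℝ) + 1) • closure S := by
    obtain ⟨n, hn⟩ := hcover y
    exact ⟨n, smul_set_mono subset_closure
      ((hS.starConvex hS0).smul_set_subset_smul_set_of_le n.cast_nonneg (by linarith) hn)⟩
  obtain ⟨n, y, hy⟩ : ∃ n : ℕ, (interior (((n : ℝ) + 1) • closure S)).Nonempty :=
    nonempty_interior_of_iUnion_of_closed (fun n ↦ isClosed_closure.smul₀ _)
      (iUnion_eq_univ_iff.2 hcover')
  rw [interior_smul₀ (by positivity)] at hy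
  obtain ⟨z, hz, -⟩ := hy
  obtain ⟨m, w, hw, hwz⟩ := hcover' (-z)
  -- `0` lies on the open segment from the interior point `z` to `w`, a point in the direction `-z`
  have h0 : (1 / ((m : ℝ) + 2)) • z + (((m : ℝ) + 1) / (m + 2)) • w = 0 := by
    rw [← neg_neg z, ← hwz]
    match_scalars
    field_simp
    ring
  have := hS.closure.combo_interior_closure_mem_interior hz (subset_closure hw)
    (a := 1 / (m + 2)) (b := (m + 1) / (m + 2)) (by positivity) (by positivity)
    (by field_simp; ring)
  exact mem_interior_iff_mem_nhds.1 (h0 ▸ this)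

theorem ContinuousLinearMap.exists_mem_smul_norm_apply_sub_le_half (A : X →L[ℝ] Y) {D : Set X}
    {δ : ℝ} (hδ : 0 < δ) (hball : ball 0 δ ⊆ closure (A '' D)) (z : Y) :
    ∃ d ∈ (2 / δ * ‖z‖) • D, ‖A d - z‖ ≤ ‖z‖ / 2 := by
  rcases eq_or_ne z 0 with rfl | hz
  · have hD : D.Nonempty := (closure_nonempty_iff.1 ⟨0, hball (mem_ball_self hδ)⟩).of_image
    simp [zero_smul_set hD]
  set t := 2 / δ * ‖z‖
  have ht : 0 < t := by positivity
  have htδ : t * δ = 2 * ‖z‖ := by simp only [t]; field_simp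
  have hw : t⁻¹ • z ∈ closure (A '' D) := hball <| by
    rw [mem_ball_zero_iff, norm_smul, Real.norm_of_nonneg (inv_nonneg.2 ht.le), inv_mul_lt_iff₀ ht]
    linarith [norm_pos_iff.2 hz]
  obtain ⟨_, ⟨d, hd, rfl⟩, hdist⟩ := Metric.mem_closure_iff.1 hw (δ / 4) (by positivity)
  refine ⟨t • d, smul_mem_smul_set hd, ?_⟩
  calc ‖A (t • d) - z‖ = ‖t • (A d - t⁻¹ • z)‖ := by rw [map_smul, smul_sub, smul_inv_smul₀ ht.ne']
    _ = t * dist (t⁻¹ • z) (A d) := by rw [norm_smul, Real.norm_of_nonneg ht.le, dist_eq_norm']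
    _ ≤ t * δ / 4 := by rw [mul_div_assoc]; gcongr
    _ = ‖z‖ / 2 := by rw [htδ]; ring

theorem ContinuousLinearMap.exists_pos_forall_exists_mem_smul_inter_closedBall [CompleteSpace X]
    [CompleteSpace Y] (A : X →L[ℝ] Y) {C : Set X} (hCcl : IsClosed C) (hCconv : Convex ℝ C)
    (hC0 : 0 ∈ C) (hsurj : ∀ y, ∃ θ : ℝ, 0 ≤ θ ∧ ∃ z ∈ C, A (θ • z) = y) :
    ∃ c > 0, ∀ y, ∃ s ∈ (c * ‖y‖) • (C ∩ closedBall 0 1), A s = y := by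
  set D := C ∩ closedBall (0 : X) 1
  have hDcl : IsClosed D := hCcl.inter isClosed_closedBall
  have hDconv : Convex ℝ D := hCconv.inter (convex_closedBall 0 1)
  have hD0 : (0 : X) ∈ D := ⟨hC0, mem_closedBall_self zero_le_one⟩
  have hcover (y : Y) : ∃ n : ℕ, y ∈ (n : ℝ) • (A '' D) := by
    obtain ⟨θ, hθ, z, hz, rfl⟩ := hsurj y
    obtain ⟨n, hn⟩ := exists_nat_gt (θ + ‖θ • z‖)
    have hn0 : (n : ℝ) ≠ 0 := by linarith [norm_nonneg (θ • z)]
    refine ⟨n, image_smul_set A (n : ℝ) D ▸ mem_image_of_mem A ?_⟩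
    rw [smul_set_inter₀ hn0, smul_unitClosedBall, Real.norm_natCast]
    exact ⟨(hCconv.starConvex hC0).smul_set_subset_smul_set_of_le hθ
      (by linarith [norm_nonneg (θ • z)]) (smul_mem_smul_set hz),
      mem_closedBall_zero_iff.2 (by linarith)⟩
  obtain ⟨δ, hδ, hball⟩ := Metric.mem_nhds_iff.1 <|
    (hDconv.linear_image (A : X →ₗ[ℝ] Y)).closure_mem_nhds_zero_of_forall_mem_smul
      ⟨0, hD0, map_zero A⟩ hcover
  refine ⟨2 * (2 / δ), by positivity, fun y ↦ ?_⟩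
  obtain ⟨s, hs, hAs⟩ := exists_eq_zero_of_forall_exists_halving hDcl hDconv hD0
    inter_subset_right (G := fun x ↦ A x - y) (x₀ := 0) (c := 2 / δ) (by positivity)
    (A.continuous.sub continuous_const).continuousOn fun x _ ↦ by
      obtain ⟨d, hd, hdz⟩ := A.exists_mem_smul_norm_apply_sub_le_half hδ hball (y - A x)
      refine ⟨d, by rwa [norm_sub_rev], ?_⟩
      rw [map_add, norm_sub_rev (A x)]
      convert hdz using 2
      abel
  refine ⟨s, by simpa using hs, sub_eq_zero.1 hAs⟩

theorem ApproximatesLinearOn.exists_sub_mem_smul_and_eq_zero [CompleteSpace X] {D : Set X}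
    (hDcl : IsClosed D) (hDconv : Convex ℝ D) (hD0 : 0 ∈ D) (hD1 : D ⊆ closedBall 0 1)
    {A : X →L[ℝ] Y} {c : ℝ} (hc : 0 ≤ c) (hsolve : ∀ y, ∃ s ∈ (c * ‖y‖) • D, A s = y)
    {F : X → Y} {a : X} {ρ : ℝ} {ε : NNReal} (hε : ε * c ≤ 1 / 2)
    (hF : ApproximatesLinearOn F A (closedBall a ρ) ε) {x₀ : X}
    (hx₀ : ‖x₀ - a‖ + 2 * c * ‖F x₀‖ ≤ ρ) :
    ∃ ξ, ξ - x₀ ∈ (2 * c * ‖F x₀‖) • D ∧ F ξ = 0 := by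
  have hball {z : X} (hz : ‖z - x₀‖ ≤ 2 * c * ‖F x₀‖) : z ∈ closedBall a ρ := by
    rw [mem_closedBall, dist_eq_norm]
    linarith [norm_sub_le_norm_sub_add_norm_sub z x₀ a]
  refine exists_eq_zero_of_forall_exists_halving hDcl hDconv hD0 hD1 hc
    (hF.continuousOn.mono fun z hz ↦ hball (by rwa [mem_closedBall, dist_eq_norm] at hz))
    fun x hx ↦ ?_
  obtain ⟨d, hd, hAd⟩ := hsolve (-F x)
  rw [norm_neg] at hd
  have hd_norm : ‖d‖ ≤ c * ‖F x‖ := by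
    simpa using smul_set_subset_closedBall_of_subset_closedBall hD1 (by positivity) hd
  refine ⟨d, hd, ?_⟩
  have hxd : ‖x + d - x₀‖ ≤ 2 * c * ‖F x₀‖ := by
    rw [add_sub_right_comm]
    linarith [norm_add_le (x - x₀) d, mul_nonneg hc (norm_nonneg (F x))]
  calc ‖F (x + d)‖ = ‖F (x + d) - F x - A (x + d - x)‖ := by
        rw [add_sub_cancel_left, hAd, sub_neg_eq_add, sub_add_cancel]
    _ ≤ ε * ‖x + d - x‖ := hF _ (hball hxd) _ (hball (by nlinarith [norm_nonneg (F x)]))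
    _ ≤ ‖F x‖ / 2 := by
      rw [add_sub_cancel_left]
      nlinarith [ε.2, norm_nonneg (F x)]

theorem HasStrictFDerivAt.exists_approximatesLinearOn_closedBall {F : X → Y} {A : X →L[ℝ] Y}
    {a : X} (hF : HasStrictFDerivAt F A a) {ε : NNReal} (hε : 0 < ε) :
    ∃ ρ > 0, ApproximatesLinearOn F A (closedBall a ρ) ε := by
  obtain ⟨U, hU, happrox⟩ := hF.approximates_deriv_on_nhds (Or.inr hε)
  obtain ⟨ρ, hρ, hρU⟩ := Metric.mem_nhds_iff.1 hU
  exact ⟨ρ / 2, half_pos hρ,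
    happrox.mono_set ((closedBall_subset_ball (half_lt_self hρ)).trans hρU)⟩

theorem HasFDerivAt.tendsto_inv_mul_norm_apply_add_smul {F : X → Y} {A : X →L[ℝ] Y} {a v : X}
    (hF : HasFDerivAt F A a) (hFa : F a = 0) (hAv : A v = 0) :
    Tendsto (fun t : ℝ ↦ t⁻¹ * ‖F (a + t • v)‖) (𝓝[>] 0) (𝓝 0) := by
  have := (hF.lim v (c := fun t : ℝ ↦ t⁻¹) (l := 𝓝[>] 0)
    (tendsto_norm_inv_nhdsNE_zero_atTop.mono_left (nhdsGT_le_nhdsNE 0))).norm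
  simp only [inv_inv, hFa, sub_zero, hAv, norm_zero] at this
  refine this.congr' ?_
  filter_upwards [self_mem_nhdsWithin] with t (ht : 0 < t)
  rw [norm_smul, Real.norm_of_nonneg (inv_nonneg.2 ht.le)]

theorem HasStrictFDerivAt.mem_posTangentConeAt_inter_preimage_zero [CompleteSpace X]
    {M : Set X} (hMcl : IsClosed M) (hMconv : Convex ℝ M) {F : X → Y} {A : X →L[ℝ] Y} {a : X}
    (hF : HasStrictFDerivAt F A a) (ha : a ∈ M) (hFa : F a = 0) {c : ℝ} (hc : 0 < c)
    (hsolve : ∀ y, ∃ s ∈ (c * ‖y‖) • ((a + ·) ⁻¹' M ∩ closedBall 0 1), A s = y)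
    {r : ℝ} (hr : 0 ≤ r) {v : X} (hv : v ∈ r • (a + ·) ⁻¹' M) (hAv : A v = 0) :
    v ∈ posTangentConeAt (M ∩ F ⁻¹' {0}) a := by
  set C := (a + ·) ⁻¹' M
  have hCcl : IsClosed C := hMcl.preimage (continuous_const.add continuous_id)
  have hCconv : Convex ℝ C := hMconv.translate_preimage_right a
  have hC0 : (0 : X) ∈ C := by simpa [C] using ha
  set ε := (2 * c)⁻¹.toNNReal
  have hε : ε * c ≤ 1 / 2 := by
    rw [Real.coe_toNNReal _ (by positivity), mul_inv, mul_assoc, inv_mul_cancel₀ hc.ne']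
    norm_num
  obtain ⟨ρ, hρ, happrox⟩ :=
    hF.exists_approximatesLinearOn_closedBall (ε := ε) (Real.toNNReal_pos.2 (by positivity))
  have ht : Tendsto (fun t : ℝ ↦ t) (𝓝[>] 0) (𝓝 0) := tendsto_id.mono_left nhdsWithin_le_nhds
  have hres := hF.hasFDerivAt.tendsto_inv_mul_norm_apply_add_smul hFa hAv
  have hF0 : Tendsto (fun t : ℝ ↦ ‖F (a + t • v)‖) (𝓝[>] 0) (𝓝 0) := by
    simpa [hFa] using (hF.continuousAt.tendsto.comp
      (by simpa using (ht.smul_const v).const_add a)).norm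
  have hsmall : ∀ᶠ t : ℝ in 𝓝[>] 0, ‖t • v‖ + 2 * c * ‖F (a + t • v)‖ ≤ ρ ∧
      t * r + 2 * c * ‖F (a + t • v)‖ ≤ 1 := by
    have hF0' := hF0.const_mul (2 * c)
    rw [mul_zero] at hF0'
    refine (((ht.smul_const v).norm.add hF0').eventually (ge_mem_nhds ?_)).and
      (((ht.mul_const r).add hF0').eventually (ge_mem_nhds ?_)) <;> simp [hρ]
  refine mem_posTangentConeAt_of_eventually_exists_norm_sub_le
    (g := fun t ↦ 2 * c * ‖F (a + t • v)‖)
    (by simpa [mul_left_comm] using hres.const_mul (2 * c)) ?_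
  filter_upwards [hsmall, self_mem_nhdsWithin] with t ⟨h1, h2⟩ (ht0 : 0 < t)
  obtain ⟨ξ, hξ, hFξ⟩ := happrox.exists_sub_mem_smul_and_eq_zero (hCcl.inter isClosed_closedBall)
    (hCconv.inter (convex_closedBall 0 1)) ⟨hC0, mem_closedBall_self zero_le_one⟩
    inter_subset_right hc.le hsolve hε (x₀ := a + t • v) (by simpa using h1)
  refine ⟨ξ, ⟨?_, hFξ⟩, by simpa using
    smul_set_subset_closedBall_of_subset_closedBall inter_subset_right (by positivity) hξ⟩
  have hξa : ξ - a ∈ (t * r + 2 * c * ‖F (a + t • v)‖) • C := by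
    rw [hCconv.add_smul (by positivity) (by positivity), mul_smul]
    convert add_mem_add (smul_mem_smul_set (a := t) hv) (smul_set_mono inter_subset_left hξ) using 1
    abel
  simpa [C] using (hCconv.starConvex hC0).smul_set_subset_smul_set_of_le (by positivity) h2 hξa

theorem PointedCone.exists_multiplier_of_nonneg_on_ker (K : PointedCone ℝ X) (A : X →L[ℝ] Y)
    (f : X →L[ℝ] ℝ) {c : ℝ} (hsurj : ∀ y, ∃ s ∈ K, A s = y ∧ ‖s‖ ≤ c * ‖y‖)
    (hf : ∀ s ∈ K, A s = 0 → 0 ≤ f s) :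
    ∃ lam : Y →L[ℝ] ℝ, ∀ s ∈ K, lam (A s) ≤ f s := by
  let P : PointedCone ℝ (Y × ℝ) :=
    { carrier := {p | ∃ s ∈ K, A s = p.1 ∧ f s ≤ p.2}
      add_mem' := by
        rintro ⟨_, t₁⟩ ⟨_, t₂⟩ ⟨s₁, hs₁, rfl, h₁⟩ ⟨s₂, hs₂, rfl, h₂⟩
        exact ⟨s₁ + s₂, K.add_mem hs₁ hs₂, map_add A s₁ s₂, by
          simp only [map_add, Prod.mk_add_mk]; linarith⟩
      zero_mem' := ⟨0, K.zero_mem, by simp, by simp⟩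
      smul_mem' := by
        rintro ⟨r, hr⟩ ⟨_, t⟩ ⟨s, hs, rfl, h⟩
        rw [Nonneg.mk_smul, Prod.smul_mk]
        exact ⟨r • s, PointedCone.smul_mem K hr hs, map_smul A r s, by
          simpa only [map_smul, smul_eq_mul] using mul_le_mul_of_nonneg_left h hr⟩ }
  let φ : (Y × ℝ) →ₗ.[ℝ] ℝ := (LinearMap.snd ℝ Y ℝ).toPMap (LinearMap.range (LinearMap.inr ℝ Y ℝ))
  have hφP : ∀ p : φ.domain, (p : Y × ℝ) ∈ P → 0 ≤ φ p := by
    rintro ⟨_, t, rfl⟩ ⟨s, hs, hAs, hst⟩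
    exact (hf s hs hAs).trans hst
  have hφdense : ∀ p, ∃ q : φ.domain, (q : Y × ℝ) + p ∈ P := by
    rintro ⟨y, t⟩
    obtain ⟨s, hs, rfl, -⟩ := hsurj y
    exact ⟨⟨(0, f s - t), f s - t, rfl⟩, s, hs, by simp, by simp⟩
  obtain ⟨g, hgφ, hgP⟩ := riesz_extension P φ hφP hφdense
  let lam : Y →ₗ[ℝ] ℝ := -g.comp (LinearMap.inl ℝ Y ℝ)
  have hle (s : X) (hs : s ∈ K) : lam (A s) ≤ f s := by
    have hgA := hgP (A s, f s) ⟨s, hs, rfl, le_rfl⟩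
    have hg_inr : g (0, f s) = f s := hgφ ⟨(0, f s), f s, rfl⟩
    rw [← add_zero (A s), ← zero_add (f s), ← Prod.mk_add_mk, map_add, hg_inr] at hgA
    simp only [lam, LinearMap.neg_apply, LinearMap.comp_apply, LinearMap.inl_apply]
    linarith
  have hbound (y : Y) : lam y ≤ ‖f‖ * c * ‖y‖ := by
    obtain ⟨s, hs, rfl, hsn⟩ := hsurj y
    calc lam (A s) ≤ f s := hle s hs
      _ ≤ ‖f‖ * ‖s‖ := (le_abs_self _).trans (f.le_opNorm s)
      _ ≤ ‖f‖ * c * ‖A s‖ := by rw [mul_assoc]; gcongr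
  refine ⟨lam.mkContinuous (‖f‖ * c) fun y ↦ abs_le.2 ⟨?_, hbound y⟩, hle⟩
  linarith [show -lam y ≤ ‖f‖ * c * ‖y‖ by simpa using hbound (-y)]

end

theorem zowe_kurcyusz_lagrange_multiplier_general
    {X Y : Type*}
    [NormedAddCommGroup X] [NormedSpace ℝ X] [CompleteSpace X]
    [NormedAddCommGroup Y] [NormedSpace ℝ Y] [CompleteSpace Y]
    (M : Set X) (hMcl : IsClosed M) (hMconv : Convex ℝ M)
    (J : X → ℝ) (F : X → Y) (xhat : X)
    (hxM : xhat ∈ M) (hFx : F xhat = 0)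
    -- `J` Fréchet differentiable at `x̂`:
    (J' : X →L[ℝ] ℝ) (hJ : HasFDerivAt J J' xhat)
    -- `F` continuously Fréchet differentiable at `x̂`:
    (F' : X → (X →L[ℝ] Y)) (hF : ∀ x, HasFDerivAt F (F' x) x)
    (hF'cont : ContinuousAt F' xhat)
    -- local minimality of `x̂` over `{x ∈ M : F(x) = 0}`:
    (hmin : ∃ U ∈ nhds xhat, ∀ x ∈ U ∩ M, F x = 0 → J xhat ≤ J x)
    -- regular point condition `F'(x̂)[C(x̂)] = Y`:
    (hreg : ∀ y : Y, ∃ θ : ℝ, 0 ≤ θ ∧ ∃ x ∈ M, F' xhat (θ • (x - xhat)) = y) :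
    ∃ lam : Y →L[ℝ] ℝ, ∀ θ : ℝ, 0 ≤ θ → ∀ x ∈ M,
      0 ≤ J' (θ • (x - xhat)) - lam (F' xhat (θ • (x - xhat))) := by
  set A := F' xhat
  set C := (xhat + ·) ⁻¹' M
  have hCconv : Convex ℝ C := hMconv.translate_preimage_right xhat
  have hC0 : (0 : X) ∈ C := by simpa [C] using hxM
  have hsub {x : X} (hx : x ∈ M) : x - xhat ∈ C := by simpa [C] using hx
  obtain ⟨c, hc, hsolve⟩ := A.exists_pos_forall_exists_mem_smul_inter_closedBall
    (hMcl.preimage (continuous_const.add continuous_id)) hCconv hC0 fun y ↦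
      let ⟨θ, hθ, x, hx, hAx⟩ := hreg y; ⟨θ, hθ, x - xhat, hsub hx, hAx⟩
  have hstrict : HasStrictFDerivAt F A xhat :=
    hasStrictFDerivAt_of_hasFDerivAt_of_continuousAt (Eventually.of_forall hF) hF'cont
  have hlocmin : IsLocalMinOn J (M ∩ F ⁻¹' {0}) xhat :=
    let ⟨U, hU, hUmin⟩ := hmin
    mem_of_superset (inter_mem_nhdsWithin _ hU) fun x ⟨⟨hxM, hFx⟩, hxU⟩ ↦ hUmin x ⟨hxU, hxM⟩ hFx
  let K : PointedCone ℝ X := (ConvexCone.hull ℝ C).toPointedCone (ConvexCone.subset_hull hC0)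
  obtain ⟨lam, hlam⟩ := K.exists_multiplier_of_nonneg_on_ker A J' (c := c)
    (fun y ↦ by
      obtain ⟨_, ⟨d, hd, rfl⟩, hAs⟩ := hsolve y
      exact ⟨_, K.smul_mem (by positivity) (ConvexCone.subset_hull hd.1), hAs, by
        simpa using smul_set_subset_closedBall_of_subset_closedBall inter_subset_right
          (by positivity) (smul_mem_smul_set hd)⟩)
    fun s hs hAs ↦ by
      obtain ⟨r, hr, hsr⟩ := (ConvexCone.mem_hull_of_convex hCconv).1 hs
      exact hlocmin.hasFDerivWithinAt_nonneg hJ.hasFDerivWithinAt <|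
        hstrict.mem_posTangentConeAt_inter_preimage_zero hMcl hMconv hxM hFx hc hsolve hr.le hsr hAs
  exact ⟨lam, fun θ hθ x hx ↦ sub_nonneg.2 <| hlam _ <|
    K.smul_mem hθ (ConvexCone.subset_hull (hsub hx))⟩

/-- Zowe–Kurcyusz Lagrange multiplier theorem: if `x̂ ∈ M`, `F(x̂) = 0`, is a local minimizer
of `J` over `{x ∈ M : F(x) = 0}`, `J` is Fréchet differentiable at `x̂`, `F` is continuously
Fréchet differentiable at `x̂`, and `x̂` is a regular point
(`F'(x̂)[C(x̂)] = Y`, where `C(x̂) = {θ(x - x̂) : x ∈ M, θ ≥ 0}` is the conical hull),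
then there exists `λ ∈ Y'` with `J'(x̂)[s] - ⟨λ, F'(x̂)[s]⟩ ≥ 0` for all `s ∈ C(x̂)`. -/
theorem zowe_kurcyusz_lagrange_multiplier
    {X Y : Type*}
    [NormedAddCommGroup X] [NormedSpace ℝ X] [CompleteSpace X]
    [NormedAddCommGroup Y] [NormedSpace ℝ Y] [CompleteSpace Y]
    (M : Set X) (hMne : M.Nonempty) (hMcl : IsClosed M) (hMconv : Convex ℝ M)
    (J : X → ℝ) (F : X → Y) (xhat : X)
    (hxM : xhat ∈ M) (hFx : F xhat = 0)
    -- `J` Fréchet differentiable at `x̂`: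
    (J' : X →L[ℝ] ℝ) (hJ : HasFDerivAt J J' xhat)
    -- `F` continuously Fréchet differentiable at `x̂`:
    (F' : X → (X →L[ℝ] Y)) (hF : ∀ x, HasFDerivAt F (F' x) x)
    (hF'cont : ContinuousAt F' xhat)
    -- local minimality of `x̂` over `{x ∈ M : F(x) = 0}`:
    (hmin : ∃ U ∈ nhds xhat, ∀ x ∈ U ∩ M, F x = 0 → J xhat ≤ J x)
    -- regular point condition `F'(x̂)[C(x̂)] = Y`:
    (hreg : ∀ y : Y, ∃ θ : ℝ, 0 ≤ θ ∧ ∃ x ∈ M, F' xhat (θ • (x - xhat)) = y) :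
    ∃ lam : Y →L[ℝ] ℝ, ∀ θ : ℝ, 0 ≤ θ → ∀ x ∈ M,
      0 ≤ J' (θ • (x - xhat)) - lam (F' xhat (θ • (x - xhat))) :=
  zowe_kurcyusz_lagrange_multiplier_general M hMcl hMconv J F xhat hxM hFx J' hJ F' hF hF'cont hmin
    hreg
end
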